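/- The map sending a maximal chain (id, w_1, …, w_{n−1}) of NC(S_n) to the flag F(w_1) ⊂ F(w_2) ⊂ ⋯ ⊂ F(w_{n−1}) = 𝔽₂^{n−1} is well defined (dim F(w_i) = i for all i, so this is a complete flag of subspaces of 𝔽₂^{n−1}) and injective; moreover, whenever two maximal chains differ in exactly one entry, their image flags differ in exactly one subspace. Consequently the Hurwitz graph H(S_n) is isomorphic to a subgraph of the graph whose vertices are the complete flags of 𝔽₂^{n−1} and whose edges join two flags that differ in exactly one subspace. -/

import Mathlib

/-!
Put `v_i = e_i` for `i < n` and `v_n = 0`, so that `f'((i j))` is the line through `v_i + v_j`,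
and let `M(w)` be the span of the vectors `v_p + v_{w p}`. It contains `v_a + v_b` exactly when
`a` and `b` lie in one cycle of `w`: the indicator functional of a union of cycles avoiding `n`
vanishes on `M(w)`. Multiplying by a transposition changes `dim M(w)` by at most one, and
splitting off `(p, w p)` lowers it by exactly one, so `dim M(w)` is the reflection length. A
parity argument then shows that `t ≤ w` iff the line of `t` lies in `M(w)`, whence `F(w) = M(w)`
and `F` maps maximal chains to complete flags.

Every `w ≤ c` visits each of its cycles in the cyclic order of `1, …, n`: this holds for `c`,
and going down from `c` one transposition at a time splits a cycle into two arcs. Such a `w` is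
determined by its cycles, hence by `M(w)`. So `F` is injective on `NC(S_n)`, and two chains
differ in position `i` iff their flags do.
-/

namespace NCPaper

variable {G : Type*} [Group G]

/-- `lenT T w` is the least `k` such that `w` is a product of `k` elements of `T`
(the reflection length with respect to `T`). -/
noncomputable def lenT (T : Set G) (w : G) : ℕ :=
  sInf {k | ∃ l : List G, (∀ t ∈ l, t ∈ T) ∧ l.length = k ∧ l.prod = w}

/-- The absolute order with respect to the generating set `T`. -/
def absLe (T : Set G) (v w : G) : Prop :=
  lenT T w = lenT T v + lenT T (v⁻¹ * w)

/-- Strict absolute order. -/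
def absLt (T : Set G) (v w : G) : Prop := absLe T v w ∧ v ≠ w

/-- The noncrossing partition lattice `NC(W, c)`: the interval `[1, c]` in absolute order. -/
def NC (T : Set G) (c : G) : Set G := {w | absLe T w c}

/-- A maximal chain `(w_0, …, w_k)` in `NC(W, c)`. -/
def IsNCMaxChain (T : Set G) (c : G) {k : ℕ} (w : Fin (k+1) → G) : Prop :=
  w 0 = 1 ∧ w (Fin.last k) = c ∧ (∀ i, w i ∈ NC T c) ∧
  (∀ i : Fin (k+1), lenT T (w i) = i.val) ∧
  ∀ i : Fin k, absLt T (w i.castSucc) (w i.succ)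

/-- The Hurwitz graph: vertices are the maximal chains of `NC(W,c)`, and two chains are
adjacent iff they differ in exactly one entry. -/
def hurwitzGraph (T : Set G) (c : G) (k : ℕ) :
    SimpleGraph {w : Fin (k+1) → G // IsNCMaxChain T c w} where
  Adj a b := ∃! i, a.1 i ≠ b.1 i
  symm := by
    refine ⟨?_⟩
    rintro a b ⟨i, hi, hu⟩
    exact ⟨i, hi.symm, fun j hj => hu j hj.symm⟩
  loopless := by refine ⟨?_⟩; rintro a ⟨i, hi, _⟩; exact hi rfl

/-- The set of transpositions (reflections) of the symmetric group `S_n`. -/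
def ST (n : ℕ) : Set (Equiv.Perm (Fin n)) := {t | t.IsSwap}

end NCPaper
namespace NCPaper

/-- The image of the `i`-th vertex of the `n`-gon in `𝔽₂^{n-1}`: the basis vector `e_i`
for `i < n-1`, and `0` for the last vertex. -/
def vvec (n : ℕ) (i : Fin n) : Fin (n-1) → ZMod 2 :=
  if h : i.val < n - 1 then Pi.single (⟨i.val, h⟩ : Fin (n-1)) 1 else 0

/-- `lineOfA n t L` says that `t` is the transposition `(i,j)` and `L` is the line
`f'(t)`, i.e. `span {e_i + e_j}` for `j < n` resp. `span {e_i}` for `j = n`. -/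
def lineOfA (n : ℕ) (t : Equiv.Perm (Fin n))
    (L : Submodule (ZMod 2) (Fin (n-1) → ZMod 2)) : Prop :=
  ∃ i j : Fin n, i ≠ j ∧ t = Equiv.swap i j ∧
    L = Submodule.span (ZMod 2) {vvec n i + vvec n j}

/-- `FA n w` is the subspace of `𝔽₂^{n-1}` spanned by the union of the lines `f'(t)`
over all transpositions `t ≤ w` in absolute order. -/
def FA (n : ℕ) (w : Equiv.Perm (Fin n)) : Submodule (ZMod 2) (Fin (n-1) → ZMod 2) :=
  sSup {L | ∃ t, lineOfA n t L ∧ absLe (ST n) t w}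

/-- A complete flag `V_1 ⊂ V_2 ⊂ ⋯ ⊂ V_{n-1}` of subspaces of `𝔽₂^{n-1}`,
recorded as the function sending `i : Fin (n-1)` to the subspace of dimension `i+1`. -/
def IsCompleteFlag (n : ℕ) (fl : Fin (n-1) → Submodule (ZMod 2) (Fin (n-1) → ZMod 2)) :
    Prop :=
  (∀ i : Fin (n-1), Module.finrank (ZMod 2) (fl i) = i.val + 1) ∧
  (∀ i j : Fin (n-1), i ≤ j → fl i ≤ fl j)

/-- The graph on complete flags of `𝔽₂^{n-1}`, two flags being adjacent iff they differ
in exactly one subspace. -/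
def flagGraph (n : ℕ) :
    SimpleGraph {fl : Fin (n-1) → Submodule (ZMod 2) (Fin (n-1) → ZMod 2) //
                 IsCompleteFlag n fl} where
  Adj a b := ∃! i, a.1 i ≠ b.1 i
  symm := by
    refine ⟨?_⟩
    rintro a b ⟨i, hi, hu⟩
    exact ⟨i, hi.symm, fun j hj => hu j hj.symm⟩
  loopless := by refine ⟨?_⟩; rintro a ⟨i, hi, _⟩; exact hi rfl

/-- The flag associated to a maximal chain `(1, w_1, …, w_{n-1})` of `NC(S_n)`:
the chain of subspaces `F(w_1) ⊂ ⋯ ⊂ F(w_{n-1})`. -/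
def flagOfChain (n : ℕ) (w : Fin (n-1+1) → Equiv.Perm (Fin n)) :
    Fin (n-1) → Submodule (ZMod 2) (Fin (n-1) → ZMod 2) :=
  fun i => FA n (w i.succ)

end NCPaper

open Equiv Equiv.Perm Submodule Module

lemma Submodule.finrank_sup_span_singleton_le {K V : Type*} [DivisionRing K] [AddCommGroup V]
    [Module K V] [Module.Finite K V] (p : Submodule K V) (x : V) :
    finrank K ↥(p ⊔ K ∙ x) ≤ finrank K p + 1 := by
  by_cases hx : x ∈ p
  · rw [sup_eq_left.mpr ((span_singleton_le_iff_mem x p).mpr hx)]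
    exact Nat.le_succ _
  · exact (finrank_sup_span_singleton hx).le

lemma Submodule.add_mem_of_add_mem_of_add_mem {V : Type*} [AddCommGroup V] [Module (ZMod 2) V]
    {U : Submodule (ZMod 2) V} {x y z : V} (hxy : x + y ∈ U) (hyz : y + z ∈ U) :
    x + z ∈ U := by
  have h := add_mem hxy hyz
  rwa [add_assoc, ← add_assoc y, ZModModule.add_self, zero_add] at h

lemma Fin.existsUnique_iff_succ {k : ℕ} {P : Fin (k + 1) → Prop} (h0 : ¬ P 0) :
    (∃! i, P i) ↔ ∃! j : Fin k, P j.succ := by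
  constructor
  · rintro ⟨i, hi, huniq⟩
    cases i using Fin.cases with
    | zero => exact absurd hi h0
    | succ j => exact ⟨j, hi, fun j' hj' => Fin.succ_injective _ (huniq _ hj')⟩
  · rintro ⟨j, hj, huniq⟩
    refine ⟨j.succ, hj, fun i hi => ?_⟩
    cases i using Fin.cases with
    | zero => exact absurd hi h0
    | succ j' => rw [huniq j' hi]

lemma Equiv.Perm.SameCycle.of_forall_sameCycle_apply {α : Type*} [Finite α] {x y : Perm α}
    (hxy : ∀ p, x.SameCycle p (y p)) {p q : α} (h : y.SameCycle p q) : x.SameCycle p q := by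
  obtain ⟨k, rfl⟩ := h.exists_nat_pow_eq
  clear h
  induction k generalizing p with
  | zero => exact SameCycle.refl x p
  | succ k ih => exact (hxy p).trans (by rw [pow_succ, mul_apply]; exact ih)

lemma Equiv.Perm.SameCycle.sameCycle_mul_swap_apply {α : Type*} [DecidableEq α] {x : Perm α}
    {a b : α} (hab : x.SameCycle a b) (p : α) : x.SameCycle p ((x * swap a b) p) := by
  rw [mul_apply, sameCycle_apply_right, swap_apply_def]
  split_ifs with hpa hpb
  · exact hpa ▸ hab
  · exact hpb ▸ hab.symm
  · exact SameCycle.refl x p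

namespace NCPaper

section CycleSpace

variable {α V : Type*} [AddCommGroup V] [Module (ZMod 2) V] (v : α → V)

/-- With `v = vvec n` this is `F(w)`, see `FA_eq_cycleSpace`. -/
def cycleSpace (w : Perm α) : Submodule (ZMod 2) V :=
  span (ZMod 2) (Set.range fun p => v p + v (w p))

lemma add_apply_mem_cycleSpace (w : Perm α) (p : α) : v p + v (w p) ∈ cycleSpace v w :=
  subset_span ⟨p, rfl⟩

lemma cycleSpace_le_iff {w : Perm α} {U : Submodule (ZMod 2) V} :
    cycleSpace v w ≤ U ↔ ∀ p, v p + v (w p) ∈ U := by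
  simp only [cycleSpace, span_le, Set.range_subset_iff, SetLike.mem_coe]

lemma cycleSpace_one : cycleSpace v 1 = ⊥ :=
  eq_bot_iff.mpr <| (cycleSpace_le_iff v).mpr fun p => by simp [ZModModule.add_self]

lemma cycleSpace_mul_le (u w : Perm α) :
    cycleSpace v (u * w) ≤ cycleSpace v u ⊔ cycleSpace v w :=
  (cycleSpace_le_iff v).mpr fun p => add_mem_of_add_mem_of_add_mem
    (mem_sup_right (add_apply_mem_cycleSpace v w p))
    (mem_sup_left (add_apply_mem_cycleSpace v u (w p)))

lemma cycleSpace_swap [DecidableEq α] (a b : α) :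
    cycleSpace v (swap a b) = ZMod 2 ∙ (v a + v b) := by
  refine le_antisymm ((cycleSpace_le_iff v).mpr fun p => ?_) ?_
  · rw [swap_apply_def]
    split_ifs with hpa hpb
    · exact hpa ▸ mem_span_singleton_self _
    · rw [hpb, add_comm]
      exact mem_span_singleton_self _
    · simp [ZModModule.add_self]
  · simpa [span_singleton_le_iff_mem] using add_apply_mem_cycleSpace v (swap a b) a

lemma cycleSpace_swap_mul_le [DecidableEq α] (a b : α) (w : Perm α) :
    cycleSpace v (swap a b * w) ≤ cycleSpace v w ⊔ ZMod 2 ∙ (v a + v b) := by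
  rw [sup_comm, ← cycleSpace_swap]
  exact cycleSpace_mul_le v _ _

lemma cycleSpace_mul_swap_le [DecidableEq α] (w : Perm α) (a b : α) :
    cycleSpace v (w * swap a b) ≤ cycleSpace v w ⊔ ZMod 2 ∙ (v a + v b) := by
  rw [← cycleSpace_swap]
  exact cycleSpace_mul_le v _ _

lemma add_mem_cycleSpace_of_sameCycle [Finite α] {w : Perm α} {a b : α}
    (h : w.SameCycle a b) : v a + v b ∈ cycleSpace v w := by
  obtain ⟨k, rfl⟩ := h.exists_nat_pow_eq
  clear h
  induction k with
  | zero => simp [ZModModule.add_self]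
  | succ k ih =>
    rw [pow_succ', mul_apply]
    exact add_mem_of_add_mem_of_add_mem ih (add_apply_mem_cycleSpace v w _)

variable [Module.Finite (ZMod 2) V]

lemma finrank_cycleSpace_mul_le (u w : Perm α) :
    finrank (ZMod 2) (cycleSpace v (u * w)) ≤
      finrank (ZMod 2) (cycleSpace v u) + finrank (ZMod 2) (cycleSpace v w) :=
  (Submodule.finrank_mono (cycleSpace_mul_le v u w)).trans
    (Submodule.finrank_add_le_finrank_add_finrank _ _)

lemma finrank_cycleSpace_list_prod_le [DecidableEq α] {l : List (Perm α)}
    (hl : ∀ t ∈ l, t.IsSwap) : finrank (ZMod 2) (cycleSpace v l.prod) ≤ l.length := by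
  induction l with
  | nil => rw [List.prod_nil, cycleSpace_one, finrank_bot, List.length_nil]
  | cons t l ih =>
    obtain ⟨a, b, -, rfl⟩ := hl t List.mem_cons_self
    rw [List.prod_cons, List.length_cons]
    calc finrank (ZMod 2) (cycleSpace v (swap a b * l.prod))
        ≤ finrank (ZMod 2) (cycleSpace v l.prod) + 1 :=
          (Submodule.finrank_mono (cycleSpace_swap_mul_le v a b _)).trans
            (finrank_sup_span_singleton_le _ _)
      _ ≤ l.length + 1 := by
          gcongr
          exact ih fun t ht => hl t (List.mem_cons_of_mem _ ht)

end CycleSpace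

section Vertices

variable {n : ℕ}

/-- The functional `x ↦ ∑_{i ∈ S} x i` vanishes on `cycleSpace (vvec n) w` and is `1` at
`vvec n a + vvec n b`. -/
lemma add_vvec_notMem_cycleSpace {w : Perm (Fin n)} {S : Finset (Fin n)}
    (hS : ∀ p, w p ∈ S ↔ p ∈ S) (hlast : ∀ p ∈ S, (p : ℕ) < n - 1) {a b : Fin n}
    (ha : a ∈ S) (hb : b ∉ S) : vvec n a + vvec n b ∉ cycleSpace (vvec n) w := by
  classical
  let T : Finset (Fin (n - 1)) := {i | Fin.castLE (Nat.sub_le n 1) i ∈ S}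
  let φ : (Fin (n - 1) → ZMod 2) →ₗ[ZMod 2] ZMod 2 := ∑ i ∈ T, LinearMap.proj i
  have hφ : ∀ q, φ (vvec n q) = if q ∈ S then 1 else 0 := by
    intro q
    simp only [φ, LinearMap.sum_apply, LinearMap.proj_apply, vvec]
    split_ifs with hq hqS hqS
    · rw [Finset.sum_pi_single', if_pos (by simpa [T, Fin.castLE] using hqS)]
    · rw [Finset.sum_pi_single', if_neg (by simpa [T, Fin.castLE] using hqS)]
    · exact absurd (hlast q hqS) hq
    · simp
  have hle : cycleSpace (vvec n) w ≤ LinearMap.ker φ := by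
    refine (cycleSpace_le_iff _).mpr fun p => ?_
    rw [LinearMap.mem_ker, map_add, hφ, hφ]
    by_cases hp : p ∈ S <;> simp only [hS, hp, if_true, if_false] <;> decide
  intro h
  have := hle h
  rw [LinearMap.mem_ker, map_add, hφ, hφ, if_pos ha, if_neg hb] at this
  exact one_ne_zero this

lemma add_vvec_mem_cycleSpace_iff {w : Perm (Fin n)} {a b : Fin n} :
    vvec n a + vvec n b ∈ cycleSpace (vvec n) w ↔ w.SameCycle a b := by
  classical
  refine ⟨fun h => ?_, add_mem_cycleSpace_of_sameCycle _⟩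
  by_contra hab
  let cyc : Fin n → Finset (Fin n) := fun p => {q | w.SameCycle p q}
  have hcyc : ∀ p q, w q ∈ cyc p ↔ q ∈ cyc p := fun p q => by simp [cyc]
  -- the last vertex lies in at most one of the cycles of `a` and `b`
  by_cases hlast : ∀ p ∈ cyc a, (p : ℕ) < n - 1
  · exact add_vvec_notMem_cycleSpace (hcyc a) hlast (by simp [cyc, SameCycle.refl])
      (by simpa [cyc]) h
  · have hlast' : ∀ p ∈ cyc b, (p : ℕ) < n - 1 := by
      push Not at hlast
      obtain ⟨q, hq, hqlast⟩ := hlast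
      intro p hp
      by_contra hplast
      have hpq : p = q := Fin.ext (by omega)
      simp only [cyc, Finset.mem_filter, Finset.mem_univ, true_and] at hp hq
      exact hab (hq.trans (hpq ▸ hp.symm))
    rw [add_comm] at h
    exact add_vvec_notMem_cycleSpace (hcyc b) hlast' (by simp [cyc, SameCycle.refl])
      (by simpa [cyc] using fun h => hab h.symm) h

lemma vvec_add_ne_zero {a b : Fin n} (hab : a ≠ b) : vvec n a + vvec n b ≠ 0 := by
  intro h
  have : vvec n a + vvec n b ∈ cycleSpace (vvec n) 1 := h ▸ zero_mem _
  exact hab (sameCycle_one.mp (add_vvec_mem_cycleSpace_iff.mp this))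

lemma finrank_cycleSpace_swap {a b : Fin n} (hab : a ≠ b) :
    finrank (ZMod 2) (cycleSpace (vvec n) (swap a b)) = 1 := by
  rw [cycleSpace_swap, finrank_span_singleton (vvec_add_ne_zero hab)]

/-- Take `a` moved by `w` and `b = w a`: then `swap a b * w` fixes `a`. -/
lemma exists_finrank_cycleSpace_swap_mul {w : Perm (Fin n)} (hw : w ≠ 1) :
    ∃ a b, a ≠ b ∧ finrank (ZMod 2) (cycleSpace (vvec n) (swap a b * w)) + 1 =
      finrank (ZMod 2) (cycleSpace (vvec n) w) := by
  obtain ⟨p, hp⟩ : ∃ p, w p ≠ p := by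
    by_contra! h
    exact hw (Equiv.ext h)
  set w' := swap p (w p) * w
  have hfix : w' p = p := by simp [w']
  have hnot : vvec n p + vvec n (w p) ∉ cycleSpace (vvec n) w' := fun h =>
    hp ((add_vvec_mem_cycleSpace_iff.mp h).eq_of_left hfix).symm
  have hline : ZMod 2 ∙ (vvec n p + vvec n (w p)) ≤ cycleSpace (vvec n) w :=
    (span_singleton_le_iff_mem _ _).mpr (add_apply_mem_cycleSpace _ w p)
  have heq : cycleSpace (vvec n) w =
      cycleSpace (vvec n) w' ⊔ ZMod 2 ∙ (vvec n p + vvec n (w p)) := by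
    refine le_antisymm ?_ (sup_le ?_ hline)
    · simpa [w', swap_mul_self_mul] using cycleSpace_swap_mul_le (vvec n) p (w p) w'
    · exact (cycleSpace_swap_mul_le _ _ _ _).trans (sup_le le_rfl hline)
  exact ⟨p, w p, hp.symm, by rw [heq, finrank_sup_span_singleton hnot]⟩

lemma exists_isSwap_list_length_eq_finrank_cycleSpace (w : Perm (Fin n)) :
    ∃ l : List (Perm (Fin n)), (∀ t ∈ l, t.IsSwap) ∧
      l.length = finrank (ZMod 2) (cycleSpace (vvec n) w) ∧ l.prod = w := by
  induction hk : finrank (ZMod 2) (cycleSpace (vvec n) w) using Nat.strong_induction_on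
    generalizing w with
  | _ k ih =>
  by_cases hw : w = 1
  · subst hw
    rw [cycleSpace_one, finrank_bot] at hk
    exact ⟨[], by simp, by simp [hk], rfl⟩
  obtain ⟨a, b, hab, hrank⟩ := exists_finrank_cycleSpace_swap_mul hw
  obtain ⟨l, hl, hlen, hprod⟩ := ih _ (by omega) (swap a b * w) rfl
  refine ⟨swap a b :: l, ?_, by simp [hlen]; omega, by simp [hprod, swap_mul_self_mul]⟩
  intro t ht
  rcases List.mem_cons.mp ht with rfl | ht
  · exact ⟨a, b, hab, rfl⟩
  · exact hl t ht

end Vertices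

section AbsoluteOrder

variable {n : ℕ}

lemma lenT_eq_finrank_cycleSpace (w : Perm (Fin n)) :
    lenT (ST n) w = finrank (ZMod 2) (cycleSpace (vvec n) w) := by
  obtain ⟨l, hl, hlen, hprod⟩ := exists_isSwap_list_length_eq_finrank_cycleSpace w
  refine le_antisymm (Nat.sInf_le ⟨l, hl, hlen, hprod⟩)
    (le_csInf ⟨_, l, hl, hlen, hprod⟩ ?_)
  rintro k ⟨l', hl', rfl, rfl⟩
  exact finrank_cycleSpace_list_prod_le _ hl'

lemma absLe_iff_finrank_cycleSpace {u w : Perm (Fin n)} :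
    absLe (ST n) u w ↔ finrank (ZMod 2) (cycleSpace (vvec n) w) =
      finrank (ZMod 2) (cycleSpace (vvec n) u) +
        finrank (ZMod 2) (cycleSpace (vvec n) (u⁻¹ * w)) := by
  simp only [absLe, lenT_eq_finrank_cycleSpace]

lemma sign_eq_neg_one_pow_finrank_cycleSpace (w : Perm (Fin n)) :
    sign w = (-1) ^ finrank (ZMod 2) (cycleSpace (vvec n) w) := by
  obtain ⟨l, hl, hlen, rfl⟩ := exists_isSwap_list_length_eq_finrank_cycleSpace w
  rw [← hlen, sign_prod_list_swap hl]

lemma finrank_cycleSpace_swap_mul_ne {a b : Fin n} (hab : a ≠ b) (w : Perm (Fin n)) :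
    finrank (ZMod 2) (cycleSpace (vvec n) (swap a b * w)) ≠
      finrank (ZMod 2) (cycleSpace (vvec n) w) := by
  intro h
  have hsign := sign_eq_neg_one_pow_finrank_cycleSpace (swap a b * w)
  rw [h, ← sign_eq_neg_one_pow_finrank_cycleSpace, Perm.sign_mul, sign_swap hab,
    neg_one_mul] at hsign
  exact units_ne_neg_self _ hsign.symm

lemma cycleSpace_eq_sup_of_absLe {u w : Perm (Fin n)} (h : absLe (ST n) u w) :
    cycleSpace (vvec n) w = cycleSpace (vvec n) u ⊔ cycleSpace (vvec n) (u⁻¹ * w) := by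
  refine Submodule.eq_of_le_of_finrank_le ?_ ?_
  · simpa using cycleSpace_mul_le (vvec n) u (u⁻¹ * w)
  · rw [absLe_iff_finrank_cycleSpace.mp h]
    exact Submodule.finrank_add_le_finrank_add_finrank _ _

lemma cycleSpace_mono_of_absLe {u w : Perm (Fin n)} (h : absLe (ST n) u w) :
    cycleSpace (vvec n) u ≤ cycleSpace (vvec n) w :=
  (cycleSpace_eq_sup_of_absLe h).symm ▸ le_sup_left

/-- The dimensions of `cycleSpace (vvec n) (swap a b * w)` and `cycleSpace (vvec n) w` differ by
at most one, and they differ because the signs do. -/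
lemma absLe_swap_iff {a b : Fin n} (hab : a ≠ b) {w : Perm (Fin n)} :
    absLe (ST n) (swap a b) w ↔ vvec n a + vvec n b ∈ cycleSpace (vvec n) w := by
  refine ⟨fun h => ?_, fun h => ?_⟩
  · rw [← span_singleton_le_iff_mem, ← cycleSpace_swap]
    exact cycleSpace_mono_of_absLe h
  have hline := (span_singleton_le_iff_mem _ _).mpr h
  have hdown : finrank (ZMod 2) (cycleSpace (vvec n) (swap a b * w)) ≤
      finrank (ZMod 2) (cycleSpace (vvec n) w) :=
    Submodule.finrank_mono ((cycleSpace_swap_mul_le _ _ _ _).trans (sup_le le_rfl hline))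
  have hup : finrank (ZMod 2) (cycleSpace (vvec n) w) ≤
      finrank (ZMod 2) (cycleSpace (vvec n) (swap a b * w)) + 1 := by
    have := (Submodule.finrank_mono (cycleSpace_swap_mul_le (vvec n) a b (swap a b * w))).trans
      (finrank_sup_span_singleton_le _ _)
    rwa [swap_mul_self_mul] at this
  have hne := finrank_cycleSpace_swap_mul_ne hab w
  rw [absLe_iff_finrank_cycleSpace, swap_inv, finrank_cycleSpace_swap hab]
  omega

lemma FA_eq_cycleSpace (w : Perm (Fin n)) : FA n w = cycleSpace (vvec n) w := by
  refine le_antisymm (sSup_le ?_) ((cycleSpace_le_iff _).mpr fun p => ?_)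
  · rintro L ⟨t, ⟨a, b, hab, rfl, rfl⟩, h⟩
    exact (span_singleton_le_iff_mem _ _).mpr ((absLe_swap_iff hab).mp h)
  by_cases hp : w p = p
  · rw [hp, ZModModule.add_self]
    exact zero_mem _
  refine mem_sSup_of_mem (s := ZMod 2 ∙ (vvec n p + vvec n (w p))) ?_
    (mem_span_singleton_self _)
  exact ⟨swap p (w p), ⟨p, w p, Ne.symm hp, rfl, rfl⟩,
    (absLe_swap_iff (Ne.symm hp)).mpr (add_apply_mem_cycleSpace _ w p)⟩

end AbsoluteOrder

section CyclicallyOrdered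

variable {n : ℕ}

/-- Each `w p` is the first point of the cycle of `p` met when going around the circle `Fin n`
from `p`. -/
def IsCyclicallyOrdered (w : Perm (Fin n)) : Prop :=
  ∀ p q, w.SameCycle p q → ¬ sbtw p q (w p)

lemma isCyclicallyOrdered_finRotate (n : ℕ) : IsCyclicallyOrdered (finRotate n) := by
  intro p q _
  cases n with
  | zero => exact p.elim0
  | succ m =>
    simp only [finRotate_apply, Fin.sbtw_iff, Fin.lt_def, Fin.val_add_one, Fin.ext_iff,
      Fin.val_last]
    have := q.isLt
    split_ifs <;> omega

/-- The cycle of `a` under `x * swap a b` runs from `a` through `x b` and the points after it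
back to `a`. -/
lemma IsCyclicallyOrdered.not_sbtw_mul_swap_left {x : Perm (Fin n)}
    (hx : IsCyclicallyOrdered x) {a b : Fin n} (hab : x.SameCycle a b) {q : Fin n}
    (hq : (x * swap a b).SameCycle a q) : ¬ sbtw a q ((x * swap a b) a) := by
  set y := x * swap a b
  have hya : y a = x b := by simp [y]
  let P : Fin n → Prop := fun q => x.SameCycle a q ∧ (q = a ∨ q = x b ∨ sbtw a (x b) q)
  have hstep : ∀ q, P q → P (y q) := by
    rintro q ⟨haq, hq⟩
    refine ⟨haq.trans (hab.sameCycle_mul_swap_apply q), ?_⟩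
    by_cases hqa : q = a
    · exact Or.inr (Or.inl (hqa ▸ hya))
    by_cases hqb : q = b
    · subst hqb
      exfalso
      rcases hq with hq | hq | hq
      · exact hqa hq
      · exact hqa (hab.eq_of_right hq.symm).symm
      · exact hx q a hab.symm hq.cyclic_left.cyclic_left
    have hyq : y q = x q := by simp [y, swap_apply_of_ne_of_ne hqa hqb]
    have hxq := hx q a haq.symm
    rw [hyq]
    simp only [Fin.sbtw_iff, Fin.lt_def, Fin.ext_iff] at hq hxq ⊢
    omega
  obtain ⟨k, rfl⟩ := hq.exists_nat_pow_eq
  clear hq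
  have hP : P ((y ^ k) a) := by
    induction k with
    | zero => exact ⟨SameCycle.refl x a, Or.inl rfl⟩
    | succ k ih => rw [pow_succ', mul_apply]; exact hstep _ ih
  rw [hya]
  rcases hP.2 with h | h | h
  · rw [h]; exact sbtw_irrefl_left
  · rw [h]; exact sbtw_irrefl_right
  · exact fun h' => sbtw_asymm h' h.cyclic_left

lemma IsCyclicallyOrdered.mul_swap {x : Perm (Fin n)} (hx : IsCyclicallyOrdered x)
    {a b : Fin n} (hab : x.SameCycle a b) : IsCyclicallyOrdered (x * swap a b) := by
  intro p q hpq
  by_cases hpa : p = a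
  · subst hpa
    exact hx.not_sbtw_mul_swap_left hab hpq
  by_cases hpb : p = b
  · subst hpb
    rw [swap_comm] at hpq ⊢
    exact hx.not_sbtw_mul_swap_left hab.symm hpq
  rw [mul_apply, swap_apply_of_ne_of_ne hpa hpb]
  exact hx p q (SameCycle.of_forall_sameCycle_apply hab.sameCycle_mul_swap_apply hpq)

lemma IsCyclicallyOrdered.ext {u w : Perm (Fin n)} (hu : IsCyclicallyOrdered u)
    (hw : IsCyclicallyOrdered w) (h : ∀ p q, u.SameCycle p q ↔ w.SameCycle p q) : u = w := by
  ext p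
  have hwp : u.SameCycle p (w p) := (h p _).mpr (sameCycle_apply_right.mpr (SameCycle.refl w p))
  have hup : w.SameCycle p (u p) := (h p _).mp (sameCycle_apply_right.mpr (SameCycle.refl u p))
  have hfix : u p = p ↔ w p = p :=
    ⟨fun hp => (hwp.eq_of_left hp).symm, fun hp => (hup.eq_of_left hp).symm⟩
  replace hwp := hu p _ hwp
  replace hup := hw p _ hup
  simp only [Fin.sbtw_iff, Fin.lt_def, Fin.ext_iff] at hup hwp hfix ⊢
  omega

end CyclicallyOrdered

section NoncrossingPartitions

variable {n : ℕ}

/-- The transposition is one that lowers the reflection length of `w⁻¹ * c`. -/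
lemma exists_absLe_mul_swap {w c : Perm (Fin n)} (hw : absLe (ST n) w c) (hwc : w ≠ c) :
    ∃ a b, absLe (ST n) (w * swap a b) c ∧ (w * swap a b).SameCycle a b ∧
      finrank (ZMod 2) (cycleSpace (vvec n) ((w * swap a b)⁻¹ * c)) <
        finrank (ZMod 2) (cycleSpace (vvec n) (w⁻¹ * c)) := by
  obtain ⟨a, b, hab, hrank⟩ :=
    exists_finrank_cycleSpace_swap_mul (mt inv_mul_eq_one.mp hwc)
  have hw'c : (w * swap a b)⁻¹ * c = swap a b * (w⁻¹ * c) := by simp [mul_assoc]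
  have hup : finrank (ZMod 2) (cycleSpace (vvec n) (w * swap a b)) ≤
      finrank (ZMod 2) (cycleSpace (vvec n) w) + 1 :=
    (Submodule.finrank_mono (cycleSpace_mul_swap_le _ w a b)).trans
      (finrank_sup_span_singleton_le _ _)
  have htri := finrank_cycleSpace_mul_le (vvec n) (w * swap a b) ((w * swap a b)⁻¹ * c)
  rw [mul_inv_cancel_left, hw'c] at htri
  rw [absLe_iff_finrank_cycleSpace] at hw
  have hww' : absLe (ST n) w (w * swap a b) := by
    rw [absLe_iff_finrank_cycleSpace, inv_mul_cancel_left, finrank_cycleSpace_swap hab]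
    omega
  have hmem : vvec n a + vvec n b ∈ cycleSpace (vvec n) (w * swap a b) := by
    rw [cycleSpace_eq_sup_of_absLe hww', inv_mul_cancel_left, cycleSpace_swap]
    exact mem_sup_right (mem_span_singleton_self _)
  refine ⟨a, b, ?_, add_vvec_mem_cycleSpace_iff.mp hmem, by rw [hw'c]; omega⟩
  rw [absLe_iff_finrank_cycleSpace, hw'c]
  omega

lemma isCyclicallyOrdered_of_absLe_finRotate {w : Perm (Fin n)}
    (hw : absLe (ST n) w (finRotate n)) : IsCyclicallyOrdered w := by
  induction hk : finrank (ZMod 2) (cycleSpace (vvec n) (w⁻¹ * finRotate n))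
    using Nat.strong_induction_on generalizing w with
  | _ k ih =>
  by_cases hwc : w = finRotate n
  · exact hwc ▸ isCyclicallyOrdered_finRotate n
  obtain ⟨a, b, habs, hab, hlt⟩ := exists_absLe_mul_swap hw hwc
  simpa using (ih _ (hk ▸ hlt) habs rfl).mul_swap hab

lemma eq_of_cycleSpace_eq {u w : Perm (Fin n)} (hu : u ∈ NC (ST n) (finRotate n))
    (hw : w ∈ NC (ST n) (finRotate n)) (h : cycleSpace (vvec n) u = cycleSpace (vvec n) w) :
    u = w :=
  (isCyclicallyOrdered_of_absLe_finRotate hu).ext (isCyclicallyOrdered_of_absLe_finRotate hw)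
    fun p q => by rw [← add_vvec_mem_cycleSpace_iff, h, add_vvec_mem_cycleSpace_iff]

end NoncrossingPartitions

section MaximalChains

variable {n : ℕ} {w w' : Fin (n - 1 + 1) → Perm (Fin n)}

lemma IsNCMaxChain.isCompleteFlag (hw : IsNCMaxChain (ST n) (finRotate n) w) :
    IsCompleteFlag n (flagOfChain n w) := by
  obtain ⟨-, -, -, hlen, hlt⟩ := hw
  have hmono : Monotone fun i => cycleSpace (vvec n) (w i) :=
    Fin.monotone_iff_le_succ.mpr fun i => cycleSpace_mono_of_absLe (hlt i).1
  refine ⟨fun i => ?_, fun i j hij => ?_⟩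
  · rw [flagOfChain, FA_eq_cycleSpace, ← lenT_eq_finrank_cycleSpace, hlen, Fin.val_succ]
  · simpa only [flagOfChain, FA_eq_cycleSpace] using hmono (Fin.succ_le_succ_iff.mpr hij)

lemma IsNCMaxChain.flagOfChain_eq_iff (hw : IsNCMaxChain (ST n) (finRotate n) w)
    (hw' : IsNCMaxChain (ST n) (finRotate n) w') (i : Fin (n - 1)) :
    flagOfChain n w i = flagOfChain n w' i ↔ w i.succ = w' i.succ := by
  obtain ⟨-, -, hNC, -⟩ := hw
  obtain ⟨-, -, hNC', -⟩ := hw'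
  simp only [flagOfChain, FA_eq_cycleSpace]
  exact ⟨eq_of_cycleSpace_eq (hNC _) (hNC' _), congrArg _⟩

end MaximalChains

theorem hurwitz_embeds_into_flag_graph_general (n : ℕ) :
    (∀ w : Fin (n-1+1) → Equiv.Perm (Fin n), IsNCMaxChain (ST n) (finRotate n) w →
       IsCompleteFlag n (flagOfChain n w)) ∧
    (∀ w w' : Fin (n-1+1) → Equiv.Perm (Fin n), IsNCMaxChain (ST n) (finRotate n) w →
       IsNCMaxChain (ST n) (finRotate n) w' →
       flagOfChain n w = flagOfChain n w' → w = w') ∧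
    (∀ w w' : Fin (n-1+1) → Equiv.Perm (Fin n), IsNCMaxChain (ST n) (finRotate n) w →
       IsNCMaxChain (ST n) (finRotate n) w' → (∃! i, w i ≠ w' i) →
       (∃! i, flagOfChain n w i ≠ flagOfChain n w' i)) ∧
    Nonempty ((hurwitzGraph (ST n) (finRotate n) (n-1)) ↪g (flagGraph n)) := by
  have inj : ∀ w w' : Fin (n-1+1) → Equiv.Perm (Fin n), IsNCMaxChain (ST n) (finRotate n) w →
      IsNCMaxChain (ST n) (finRotate n) w' → flagOfChain n w = flagOfChain n w' → w = w' := by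
    intro w w' hw hw' h
    funext i
    cases i using Fin.cases with
    | zero => rw [hw.1, hw'.1]
    | succ j => exact (hw.flagOfChain_eq_iff hw' j).mp (congrFun h j)
  have adj_iff : ∀ w w' : Fin (n-1+1) → Equiv.Perm (Fin n),
      IsNCMaxChain (ST n) (finRotate n) w → IsNCMaxChain (ST n) (finRotate n) w' →
      ((∃! i, flagOfChain n w i ≠ flagOfChain n w' i) ↔ ∃! i, w i ≠ w' i) := by
    intro w w' hw hw'
    rw [Fin.existsUnique_iff_succ (by simp [hw.1, hw'.1])]
    exact existsUnique_congr fun i => (hw.flagOfChain_eq_iff hw' i).not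
  refine ⟨fun w hw => hw.isCompleteFlag, inj, fun w w' hw hw' => (adj_iff w w' hw hw').mpr, ?_⟩
  exact ⟨⟨⟨fun a => ⟨flagOfChain n a.1, a.2.isCompleteFlag⟩,
    fun a b h => Subtype.ext (inj a.1 b.1 a.2 b.2 (congrArg Subtype.val h))⟩,
    fun {a b} => adj_iff a.1 b.1 a.2 b.2⟩⟩

/-- the map from maximal chains of `NC(S_n)` to complete flags of
`𝔽₂^{n-1}` is well defined and injective, sends chains differing in exactly one entry to
flags differing in exactly one subspace, and hence induces an embedding of the Hurwitz
graph `H(S_n)` into the flag graph of `𝔽₂^{n-1}`. -/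
theorem hurwitz_embeds_into_flag_graph (n : ℕ) (hn : 2 ≤ n) :
    (∀ w : Fin (n-1+1) → Equiv.Perm (Fin n), IsNCMaxChain (ST n) (finRotate n) w →
       IsCompleteFlag n (flagOfChain n w)) ∧
    (∀ w w' : Fin (n-1+1) → Equiv.Perm (Fin n), IsNCMaxChain (ST n) (finRotate n) w →
       IsNCMaxChain (ST n) (finRotate n) w' →
       flagOfChain n w = flagOfChain n w' → w = w') ∧
    (∀ w w' : Fin (n-1+1) → Equiv.Perm (Fin n), IsNCMaxChain (ST n) (finRotate n) w →
       IsNCMaxChain (ST n) (finRotate n) w' → (∃! i, w i ≠ w' i) →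
       (∃! i, flagOfChain n w i ≠ flagOfChain n w' i)) ∧
    Nonempty ((hurwitzGraph (ST n) (finRotate n) (n-1)) ↪g (flagGraph n)) :=
  hurwitz_embeds_into_flag_graph_general n

end NCPaper
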